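/- Let $(X,\mu)$ be a measure space, $f : X \to [0,\infty)$ measurable, $p > 1$, and $\lambda \ge 0$. Let $k \in \mathbb{N}$ with $k < p \le k+1$. Then $\int_{\{f > \lambda\}} (f - \lambda)^p\, d\mu \ge \int_{\{f > \lambda\}} (f^p - \lambda^p)\, d\mu - \sum_{j=1}^{k} \binom{p}{j} \lambda^{p-j} \int_{\{f > \lambda\}} (f - \lambda)^j\, d\mu$, where $\binom{p}{j}$ is the generalized binomial coefficient, assuming all integrals are finite. -/

import Mathlib

/-!
For `b ≥ 0` the remainder `(b + t)^p - t^p - ∑_{j ≤ k} (p choose j) b^(p-j) t^j` vanishes at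
`t = 0`, and its derivative in `t` is `p` times the same remainder for the exponent `p - 1` and
order `k - 1`. By induction on `k` it is therefore antitone, hence nonpositive, on `[0, ∞)`; the
base case `0 < p ≤ 1` is the subadditivity of `t ↦ t^p`. Taking `b = λ`, `t = f - λ` and
integrating over `{f > λ}` gives the theorem.
-/

open MeasureTheory Real Finset

/-- Generalized binomial coefficient `p choose j` for real `p`. -/
noncomputable def genBinom (p : ℝ) (j : ℕ) : ℝ :=
  (∏ i ∈ Finset.range j, (p - i)) / (Nat.factorial j)

@[simp]
lemma genBinom_zero (p : ℝ) : genBinom p 0 = 1 := by simp [genBinom]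

lemma succ_mul_genBinom_succ (p : ℝ) (j : ℕ) :
    ((j : ℝ) + 1) * genBinom p (j + 1) = p * genBinom (p - 1) j := by
  have hprod : ∏ i ∈ range (j + 1), (p - i) = p * ∏ i ∈ range j, (p - 1 - i) := by
    rw [prod_range_succ', mul_comm]
    simp only [Nat.cast_add, Nat.cast_one, Nat.cast_zero, sub_zero, sub_add_eq_sub_sub_swap]
  unfold genBinom
  rw [hprod, Nat.factorial_succ, Nat.cast_mul]
  push_cast
  field_simp

lemma hasDerivAt_sum_genBinom (p b s : ℝ) (n : ℕ) :
    HasDerivAt (fun s => ∑ j ∈ range (n + 1), genBinom p j * b ^ (p - j) * s ^ j)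
      (p * ∑ j ∈ range n, genBinom (p - 1) j * b ^ (p - 1 - j) * s ^ j) s := by
  refine (HasDerivAt.fun_sum fun j (_ : j ∈ range (n + 1)) =>
    (hasDerivAt_pow j s).const_mul (genBinom p j * b ^ (p - j))).congr_deriv ?_
  rw [sum_range_succ', mul_sum]
  simp only [Nat.cast_zero, zero_mul, mul_zero, add_zero, add_tsub_cancel_right]
  refine sum_congr rfl fun j _ => ?_
  rw [Nat.cast_succ, sub_sub p 1 (j : ℝ), add_comm 1 (j : ℝ)]
  linear_combination b ^ (p - (j + 1)) * s ^ j * succ_mul_genBinom_succ p j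

noncomputable def binomRemainder (p b : ℝ) (n : ℕ) (s : ℝ) : ℝ :=
  (b + s) ^ p - s ^ p - ∑ j ∈ range n, genBinom p j * b ^ (p - j) * s ^ j

lemma hasDerivAt_binomRemainder {p : ℝ} (hp : 1 ≤ p) (b s : ℝ) (n : ℕ) :
    HasDerivAt (binomRemainder p b (n + 1)) (p * binomRemainder (p - 1) b n s) s := by
  refine ((((hasDerivAt_id s).const_add b).rpow_const (Or.inr hp)).sub
    (hasDerivAt_rpow_const (Or.inr hp))).sub (hasDerivAt_sum_genBinom p b s n) |>.congr_deriv ?_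
  simp only [binomRemainder, id]
  ring

lemma binomRemainder_zero {p : ℝ} (hp : 0 < p) (b : ℝ) (n : ℕ) :
    binomRemainder p b (n + 1) 0 = 0 := by
  simp [binomRemainder, sum_range_succ', zero_rpow hp.ne']

lemma binomRemainder_nonpos (k : ℕ) {p b t : ℝ} (hkp : (k : ℝ) < p) (hpk : p ≤ k + 1)
    (hb : 0 ≤ b) (ht : 0 ≤ t) : binomRemainder p b (k + 1) t ≤ 0 := by
  induction k generalizing p t with
  | zero =>
    simp only [CharP.cast_eq_zero, zero_add] at hkp hpk
    simpa [binomRemainder] using rpow_add_le_add_rpow hb ht hkp.le hpk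
  | succ k ih =>
    push_cast at hkp hpk
    have hp : 1 ≤ p := by linarith [(k.cast_nonneg : (0 : ℝ) ≤ k)]
    have hanti : AntitoneOn (binomRemainder p b (k + 2)) (Set.Ici 0) := by
      refine antitoneOn_of_hasDerivWithinAt_nonpos (convex_Ici 0)
        (fun s _ => (hasDerivAt_binomRemainder hp b s _).continuousAt.continuousWithinAt)
        (fun s _ => (hasDerivAt_binomRemainder hp b s _).hasDerivWithinAt) fun s hs => ?_
      rw [interior_Ici] at hs
      exact mul_nonpos_of_nonneg_of_nonpos (by linarith)
        (ih (by linarith) (by linarith) (le_of_lt hs))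
    calc binomRemainder p b (k + 1 + 1) t ≤ binomRemainder p b (k + 1 + 1) 0 :=
          hanti Set.self_mem_Ici ht ht
      _ = 0 := binomRemainder_zero (by linarith) b _

lemma rpow_sub_rpow_sub_sum_genBinom_le (k : ℕ) {p b a : ℝ} (hkp : (k : ℝ) < p)
    (hpk : p ≤ k + 1) (hb : 0 ≤ b) (hba : b ≤ a) :
    a ^ p - b ^ p - ∑ j ∈ Icc 1 k, genBinom p j * b ^ (p - j) * (a - b) ^ j ≤ (a - b) ^ p := by
  have h := binomRemainder_nonpos k hkp hpk hb (sub_nonneg.2 hba)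
  rw [binomRemainder, add_sub_cancel, range_eq_Ico, sum_eq_sum_Ico_succ_bot k.succ_pos,
    Nat.succ_eq_add_one, Ico_add_one_right_eq_Icc] at h
  simp only [CharP.cast_eq_zero, sub_zero, genBinom_zero, one_mul, pow_zero, mul_one] at h
  linarith

theorem stmt16_general {X : Type*} [MeasurableSpace X] (μ : Measure X)
    (f : X → ℝ) (hf : Measurable f)
    (p : ℝ) (lam : ℝ) (hlam : 0 ≤ lam)
    (k : ℕ) (hk1 : (k : ℝ) < p) (hk2 : p ≤ k + 1)
    (h1 : IntegrableOn (fun x => (f x - lam) ^ p) {x | lam < f x} μ)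
    (h2 : IntegrableOn (fun x => f x ^ p - lam ^ p) {x | lam < f x} μ)
    (h3 : ∀ j ∈ Finset.Icc 1 k,
      IntegrableOn (fun x => (f x - lam) ^ (j : ℕ)) {x | lam < f x} μ) :
    ∫ x in {x | lam < f x}, (f x - lam) ^ p ∂μ
      ≥ (∫ x in {x | lam < f x}, (f x ^ p - lam ^ p) ∂μ)
        - ∑ j ∈ Finset.Icc 1 k,
            genBinom p j * lam ^ (p - j)
              * ∫ x in {x | lam < f x}, (f x - lam) ^ (j : ℕ) ∂μ := by
  have hterms : ∀ j ∈ Icc 1 k, IntegrableOn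
      (fun x => genBinom p j * lam ^ (p - j) * (f x - lam) ^ j) {x | lam < f x} μ :=
    fun j hj => (h3 j hj).const_mul _
  have hmono := setIntegral_mono_on h2 (h1.fun_add (integrable_finsetSum _ hterms))
    (measurableSet_lt measurable_const hf) fun x hx =>
      sub_le_iff_le_add.1 (rpow_sub_rpow_sub_sum_genBinom_le k hk1 hk2 hlam (le_of_lt hx))
  rw [integral_add h1 (integrable_finsetSum _ hterms), integral_finsetSum _ hterms] at hmono
  simp only [integral_const_mul] at hmono
  linarith

theorem stmt16 {X : Type*} [MeasurableSpace X] (μ : Measure X)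
    (f : X → ℝ) (hf : Measurable f) (hf_nonneg : ∀ x, 0 ≤ f x)
    (p : ℝ) (hp : 1 < p) (lam : ℝ) (hlam : 0 ≤ lam)
    (k : ℕ) (hk1 : (k : ℝ) < p) (hk2 : p ≤ k + 1)
    (h1 : IntegrableOn (fun x => (f x - lam) ^ p) {x | lam < f x} μ)
    (h2 : IntegrableOn (fun x => f x ^ p - lam ^ p) {x | lam < f x} μ)
    (h3 : ∀ j ∈ Finset.Icc 1 k,
      IntegrableOn (fun x => (f x - lam) ^ (j : ℕ)) {x | lam < f x} μ) :
    ∫ x in {x | lam < f x}, (f x - lam) ^ p ∂μ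
      ≥ (∫ x in {x | lam < f x}, (f x ^ p - lam ^ p) ∂μ)
        - ∑ j ∈ Finset.Icc 1 k,
            genBinom p j * lam ^ (p - j)
              * ∫ x in {x | lam < f x}, (f x - lam) ^ (j : ℕ) ∂μ :=
  stmt16_general μ f hf p lam hlam k hk1 hk2 h1 h2 h3
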